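/- Fix 0 < q < 1 and real constants c₁↑, c₂↑, c₁↓, c₂↓. Let H be the Hilbert space with orthonormal basis |j,μ,n,↑⟩ (j ∈ (1/2)ℕ, μ ∈ {−j,…,j}, n ∈ {−j−1/2,…,j+1/2}) and |j,μ,n,↓⟩ (j ≥ 1/2, μ ∈ {−j,…,j}, n ∈ {−j+1/2,…,j−1/2}). Define operators a and b on basis vectors by a|j,μ,n,·⟩ = α⁺_{jμn}|j+1/2, μ+1/2, n+1/2, ·⟩ + α⁻_{jμn}|j−1/2, μ+1/2, n+1/2, ·⟩ and b|j,μ,n,·⟩ = β⁺_{jμn}|j+1/2, μ+1/2, n−1/2, ·⟩ + β⁻_{jμn}|j−1/2, μ+1/2, n−1/2, ·⟩, where α±_{jμn}, β±_{jμn} are the 2×2 matrices given in the context acting on the (↑,↓) components by the rule τ|jμn↑⟩ = τ₁₁|j'μ'n'↑⟩ + τ₂₁|j'μ'n'↓⟩ and τ|jμn↓⟩ = τ₂₂|j'μ'n'↓⟩ + τ₁₂|j'μ'n'↑⟩ (terms with out-of-range target labels are omitted). Let D|j,μ,n,↑⟩ = (c₁↑ j + c₂↑)|j,μ,n,↑⟩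 and D|j,μ,n,↓⟩ = (c₁↓ j + c₂↓)|j,μ,n,↓⟩. Then a and b extend to bounded operators on H, and the commutators Da − aD and Db − bD, defined on finitely supported vectors, extend to bounded operators on H. -/

import Mathlib

noncomputable section

/-- The q-number `[x]_q := (q^x - q^(-x))/(q - q⁻¹)`. -/
noncomputable def qnum (q x : ℝ) : ℝ := (q ^ x - q ^ (-x)) / (q - q⁻¹)

/-- Validity predicate for the spinor basis labels `(J, M, N, s)` of `SU_q(2)`, where
`J = 2j ∈ ℕ`, `M = 2μ ∈ ℤ`, `N = 2n ∈ ℤ` and `s = true` for `↑`, `s = false` for `↓`. -/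
def PSp (x : ℕ × ℤ × ℤ × Bool) : Prop :=
  -(x.1 : ℤ) ≤ x.2.1 ∧ x.2.1 ≤ (x.1 : ℤ) ∧ Even (x.2.1 + (x.1 : ℤ)) ∧
    Odd (x.2.2.1 + (x.1 : ℤ)) ∧
    (if x.2.2.2 then -(x.1 : ℤ) - 1 ≤ x.2.2.1 ∧ x.2.2.1 ≤ (x.1 : ℤ) + 1
      else 1 ≤ (x.1 : ℤ) ∧ -(x.1 : ℤ) + 1 ≤ x.2.2.1 ∧ x.2.2.1 ≤ (x.1 : ℤ) - 1)

instance : DecidablePred PSp := fun x => by unfold PSp; infer_instance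

/-- Index set of the spinor basis `|j,μ,n,↑⟩`, `|j,μ,n,↓⟩`. -/
abbrev SpIdx : Type := {x : ℕ × ℤ × ℤ × Bool // PSp x}

/-- The spinor Hilbert space of `SU_q(2)`. -/
abbrev HSp : Type := lp (fun _ : SpIdx => ℂ) 2

/-- The basis vector `|j,μ,n,↑/↓⟩` (zero if the labels are out of range). -/
noncomputable def eSp (J : ℕ) (M N : ℤ) (s : Bool) : HSp :=
  if h : PSp (J, M, N, s) then lp.single 2 ⟨(J, M, N, s), h⟩ 1 else 0

/-- `j = J/2`. -/
noncomputable def jv (J : ℕ) : ℝ := (J : ℝ) / 2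

/-- `μ = M/2` (and likewise `n = N/2`). -/
noncomputable def hv (M : ℤ) : ℝ := (M : ℝ) / 2

/-- The eigenvalue `c₁↑ j + c₂↑` resp. `c₁↓ j + c₂↓` of the Dirac operator. -/
noncomputable def dSp (c1u c2u c1d c2d : ℝ) (J : ℕ) (s : Bool) : ℝ :=
  if s then c1u * ((J : ℝ) / 2) + c2u else c1d * ((J : ℝ) / 2) + c2d

/- Entries of the `2×2` matrix `α⁺_{jμn}` (rows/columns indexed `(↑,↓)`). -/
noncomputable def ap11 (q j μ n : ℝ) : ℝ :=
  q ^ ((1 / 2 - μ - n) / 2) * Real.sqrt (qnum q (j + μ + 1)) *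
    (q ^ (j + 1 / 2) * Real.sqrt (qnum q (j + n + 3 / 2)) / qnum q (2 * j + 2))
noncomputable def ap12 (_q _j _μ _n : ℝ) : ℝ := 0
noncomputable def ap21 (q j μ n : ℝ) : ℝ :=
  q ^ ((1 / 2 - μ - n) / 2) * Real.sqrt (qnum q (j + μ + 1)) *
    (q ^ (-(1 : ℝ) / 2) * Real.sqrt (qnum q (j - n + 1 / 2)) /
      (qnum q (2 * j + 1) * qnum q (2 * j + 2)))
noncomputable def ap22 (q j μ n : ℝ) : ℝ :=
  q ^ ((1 / 2 - μ - n) / 2) * Real.sqrt (qnum q (j + μ + 1)) *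
    (q ^ j * Real.sqrt (qnum q (j + n + 1 / 2)) / qnum q (2 * j + 1))

/- Entries of the `2×2` matrix `α⁻_{jμn}`. -/
noncomputable def am11 (q j μ n : ℝ) : ℝ :=
  q ^ ((1 / 2 - μ - n) / 2) * Real.sqrt (qnum q (j - μ)) *
    (q ^ (-j - 1) * Real.sqrt (qnum q (j - n + 1 / 2)) / qnum q (2 * j + 1))
noncomputable def am12 (q j μ n : ℝ) : ℝ :=
  q ^ ((1 / 2 - μ - n) / 2) * Real.sqrt (qnum q (j - μ)) *
    (-(q ^ (-(1 : ℝ) / 2)) * Real.sqrt (qnum q (j + n + 1 / 2)) /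
      (qnum q (2 * j) * qnum q (2 * j + 1)))
noncomputable def am21 (_q _j _μ _n : ℝ) : ℝ := 0
noncomputable def am22 (q j μ n : ℝ) : ℝ :=
  q ^ ((1 / 2 - μ - n) / 2) * Real.sqrt (qnum q (j - μ)) *
    (q ^ (-j - 1 / 2) * Real.sqrt (qnum q (j - n - 1 / 2)) / qnum q (2 * j))

/- Entries of the `2×2` matrix `β⁺_{jμn}`. -/
noncomputable def bp11 (q j μ n : ℝ) : ℝ :=
  q ^ ((-μ - n - 1 / 2) / 2) * Real.sqrt (qnum q (j + μ + 1)) *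
    (Real.sqrt (qnum q (j - n + 3 / 2)) / qnum q (2 * j + 2))
noncomputable def bp12 (_q _j _μ _n : ℝ) : ℝ := 0
noncomputable def bp21 (q j μ n : ℝ) : ℝ :=
  q ^ ((-μ - n - 1 / 2) / 2) * Real.sqrt (qnum q (j + μ + 1)) *
    (-(q ^ (j + 1)) * Real.sqrt (qnum q (j + n + 1 / 2)) /
      (qnum q (2 * j + 1) * qnum q (2 * j + 2)))
noncomputable def bp22 (q j μ n : ℝ) : ℝ :=
  q ^ ((-μ - n - 1 / 2) / 2) * Real.sqrt (qnum q (j + μ + 1)) *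
    (q ^ ((1 : ℝ) / 2) * Real.sqrt (qnum q (j - n + 1 / 2)) / qnum q (2 * j + 1))

/- Entries of the `2×2` matrix `β⁻_{jμn}`. -/
noncomputable def bm11 (q j μ n : ℝ) : ℝ :=
  q ^ ((-μ - n - 1 / 2) / 2) * Real.sqrt (qnum q (j - μ)) *
    (-(q ^ ((1 : ℝ) / 2)) * Real.sqrt (qnum q (j + n + 1 / 2)) / qnum q (2 * j + 1))
noncomputable def bm12 (q j μ n : ℝ) : ℝ :=
  q ^ ((-μ - n - 1 / 2) / 2) * Real.sqrt (qnum q (j - μ)) *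
    (-(q ^ (-j)) * Real.sqrt (qnum q (j - n + 1 / 2)) /
      (qnum q (2 * j) * qnum q (2 * j + 1)))
noncomputable def bm21 (_q _j _μ _n : ℝ) : ℝ := 0
noncomputable def bm22 (q j μ n : ℝ) : ℝ :=
  q ^ ((-μ - n - 1 / 2) / 2) * Real.sqrt (qnum q (j - μ)) *
    (-(Real.sqrt (qnum q (j + n - 1 / 2))) / qnum q (2 * j))


namespace SUq2Aux

open scoped ENNReal

lemma two_toReal : (2 : ℝ≥0∞).toReal = 2 := by simp

lemma shift_key (c : SpIdx → ℂ) (r : SpIdx → SpIdx) (K : ℝ) (hK0 : 0 ≤ K)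
    (hK : ∀ k, ‖c k‖ ≤ K)
    (hinj : ∀ k k', c k ≠ 0 → c k' ≠ 0 → r k = r k' → k = k')
    (x : HSp) (s : Finset SpIdx) :
    ∑ k ∈ s, ‖c k * x (r k)‖ ^ (2 : ℝ≥0∞).toReal ≤ (K * ‖x‖) ^ (2 : ℝ≥0∞).toReal := by
  classical
  rw [two_toReal]
  have hconv : ∀ y : ℝ, 0 ≤ y → y ^ (2:ℝ) = y ^ (2:ℕ) := fun y hy => by
    rw [← Real.rpow_natCast y 2]; norm_num
  simp only [hconv _ (norm_nonneg _)]
  set t := s.filter (fun k => c k ≠ 0) with ht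
  have h1 : ∑ k ∈ s, ‖c k * x (r k)‖ ^ (2:ℕ) = ∑ k ∈ t, ‖c k * x (r k)‖ ^ (2:ℕ) := by
    rw [ht, Finset.sum_filter_of_ne]
    intro k _ hne
    by_contra h0
    simp [h0] at hne
  rw [h1]
  have h2 : ∑ k ∈ t, ‖c k * x (r k)‖ ^ (2:ℕ) ≤ ∑ k ∈ t, K ^ (2:ℕ) * ‖x (r k)‖ ^ (2:ℕ) := by
    apply Finset.sum_le_sum
    intro k _
    rw [norm_mul, mul_pow]
    have := hK k
    gcongr

  have h3 : ∑ k ∈ t, K ^ (2:ℕ) * ‖x (r k)‖ ^ (2:ℕ)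
      = K ^ (2:ℕ) * ∑ i ∈ t.image r, ‖x i‖ ^ (2:ℕ) := by
    rw [← Finset.mul_sum, Finset.sum_image]
    intro k hk k' hk' hr
    exact hinj k k' (Finset.mem_filter.1 hk).2 (Finset.mem_filter.1 hk').2 hr
  have h4 : ∑ i ∈ t.image r, ‖x i‖ ^ (2:ℕ) ≤ ‖x‖ ^ (2:ℕ) := by
    have h5 := lp.sum_rpow_le_norm_rpow (p := 2) (by rw [two_toReal]; norm_num) x (t.image r)
    rw [two_toReal] at h5
    simpa only [hconv _ (norm_nonneg _)] using h5
  rw [hconv (K * ‖x‖) (by positivity),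
    show (K * ‖x‖) ^ (2:ℕ) = K ^ (2:ℕ) * ‖x‖ ^ (2:ℕ) from by ring]
  refine le_trans h2 ?_
  rw [h3]
  gcongr

lemma shift_exists (c : SpIdx → ℂ) (r : SpIdx → SpIdx) (K : ℝ) (hK0 : 0 ≤ K)
    (hK : ∀ k, ‖c k‖ ≤ K)
    (hinj : ∀ k k', c k ≠ 0 → c k' ≠ 0 → r k = r k' → k = k') :
    ∃ T : HSp →L[ℂ] HSp, ∀ (x : HSp) (k : SpIdx), T x k = c k * x (r k) := by
  have mem : ∀ x : HSp, Memℓp (fun k => c k * x (r k)) 2 :=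
    fun x => memℓp_gen' (shift_key c r K hK0 hK hinj x)
  let F : HSp →ₗ[ℂ] HSp :=
    { toFun := fun x => ⟨fun k => c k * x (r k), mem x⟩
      map_add' := fun x y => by
        ext k
        change c k * (x + y) (r k) = c k * x (r k) + c k * y (r k)
        rw [lp.coeFn_add, Pi.add_apply, mul_add]
      map_smul' := fun a x => by
        ext k
        change c k * (a • x) (r k) = a * (c k * x (r k))
        rw [lp.coeFn_smul, Pi.smul_apply, smul_eq_mul]
        ring }
  refine ⟨F.mkContinuous K (fun x => ?_), fun x k => rfl⟩
  apply lp.norm_le_of_forall_sum_le (by rw [two_toReal]; norm_num)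
    (mul_nonneg hK0 (norm_nonneg x))
  intro s
  exact shift_key c r K hK0 hK hinj x s

lemma shift_single_eq {T : HSp →L[ℂ] HSp} {c : SpIdx → ℂ} {r : SpIdx → SpIdx}
    (hT : ∀ x k, T x k = c k * x (r k)) (i k₀ : SpIdx) (h0 : r k₀ = i)
    (hc : ∀ k, c k ≠ 0 → r k = i → k = k₀) :
    T (lp.single 2 i 1) = c k₀ • lp.single 2 k₀ 1 := by
  ext k
  rw [hT, lp.coeFn_smul, Pi.smul_apply]
  rcases eq_or_ne k k₀ with rfl | hk
  · rw [h0, lp.single_apply_self, lp.single_apply_self, smul_eq_mul, mul_one]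
  · rw [lp.single_apply_ne 2 k₀ _ hk, smul_zero]
    by_cases hrk : r k = i
    · have hck : c k = 0 := by
        by_contra h
        exact hk (hc k h hrk)
      rw [hck, zero_mul]
    · rw [lp.single_apply_ne 2 i _ hrk, mul_zero]

lemma shift_single_zero {T : HSp →L[ℂ] HSp} {c : SpIdx → ℂ} {r : SpIdx → SpIdx}
    (hT : ∀ x k, T x k = c k * x (r k)) (i : SpIdx)
    (hz : ∀ k, r k = i → c k = 0) :
    T (lp.single 2 i 1) = 0 := by
  ext k
  rw [hT]
  by_cases hrk : r k = i
  · rw [hz k hrk, zero_mul]; rfl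
  · rw [lp.single_apply_ne 2 i _ hrk, mul_zero]; rfl

end SUq2Aux

namespace SUq2Aux

lemma eSp_pos {J : ℕ} {M N : ℤ} {s : Bool} (h : PSp (J, M, N, s)) :
    eSp J M N s = lp.single 2 (⟨(J, M, N, s), h⟩ : SpIdx) 1 := by
  rw [eSp, dif_pos h]

lemma eSp_neg {J : ℕ} {M N : ℤ} {s : Bool} (h : ¬ PSp (J, M, N, s)) :
    eSp J M N s = 0 := by
  rw [eSp, dif_neg h]

lemma opPlus_exists (σs σt : Bool) (δ : ℤ) (w : ℕ → ℤ → ℤ → ℝ) (K : ℝ) (hK0 : 0 ≤ K)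
    (hw : ∀ J M N, PSp (J, M, N, σs) → |w J M N| ≤ K) :
    ∃ T : HSp →L[ℂ] HSp,
      (∀ (J : ℕ) (M N : ℤ), PSp (J, M, N, σs) →
        T (eSp J M N σs) = ((w J M N : ℝ) : ℂ) • eSp (J + 1) (M + 1) (N + δ) σt) ∧
      (∀ (J : ℕ) (M N : ℤ) (s : Bool), s ≠ σs → T (eSp J M N s) = 0) := by
  classical
  set c : SpIdx → ℂ := fun k =>
    if k.1.2.2.2 = σt ∧ 1 ≤ k.1.1 ∧ PSp (k.1.1 - 1, k.1.2.1 - 1, k.1.2.2.1 - δ, σs)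
    then ((w (k.1.1 - 1) (k.1.2.1 - 1) (k.1.2.2.1 - δ) : ℝ) : ℂ) else 0 with hcdef
  set r : SpIdx → SpIdx := fun k =>
    if h : PSp (k.1.1 - 1, k.1.2.1 - 1, k.1.2.2.1 - δ, σs) then ⟨_, h⟩ else k with hrdef
  have hgate : ∀ k : SpIdx, c k ≠ 0 →
      k.1.2.2.2 = σt ∧ 1 ≤ k.1.1 ∧ PSp (k.1.1 - 1, k.1.2.1 - 1, k.1.2.2.1 - δ, σs) := by
    intro k hk
    by_contra hg
    exact hk (by rw [hcdef]; exact if_neg hg)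
  have hcb : ∀ k : SpIdx, ‖c k‖ ≤ K := by
    intro k
    rw [hcdef]
    dsimp only
    split
    · next hg =>
      rw [Complex.norm_real, Real.norm_eq_abs]
      exact hw _ _ _ hg.2.2
    · simpa using hK0
  have hinj : ∀ k k' : SpIdx, c k ≠ 0 → c k' ≠ 0 → r k = r k' → k = k' := by
    rintro ⟨⟨J, M, N, s⟩, hk⟩ ⟨⟨J', M', N', s'⟩, hk'⟩ h h' hr
    obtain ⟨hs1, hJ1, hP1⟩ := hgate _ h
    obtain ⟨hs2, hJ2, hP2⟩ := hgate _ h'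
    simp only at hs1 hJ1 hP1 hs2 hJ2 hP2
    rw [hrdef] at hr
    simp only [dif_pos hP1, dif_pos hP2, Subtype.mk.injEq, Prod.mk.injEq] at hr
    obtain ⟨e1, e2, e3, -⟩ := hr
    apply Subtype.ext
    simp only [Prod.mk.injEq]
    refine ⟨by omega, by omega, by omega, by rw [hs1, hs2]⟩
  obtain ⟨T, hT⟩ := shift_exists c r K hK0 hcb hinj
  refine ⟨T, ?_, ?_⟩
  · intro J M N hs
    rw [eSp_pos hs]
    by_cases ht : PSp (J + 1, M + 1, N + δ, σt)
    · have hraw : (J + 1 - 1, M + 1 - 1, N + δ - δ, σs) = (J, M, N, σs) := by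
        simp
      have h0 : r ⟨(J + 1, M + 1, N + δ, σt), ht⟩ = ⟨(J, M, N, σs), hs⟩ := by
        rw [hrdef]
        dsimp only
        rw [dif_pos (hraw ▸ hs)]
        exact Subtype.ext hraw
      have hcval : c ⟨(J + 1, M + 1, N + δ, σt), ht⟩ = ((w J M N : ℝ) : ℂ) := by
        rw [hcdef]
        dsimp only
        have e1 : J + 1 - 1 = J := by omega
        have e2 : M + 1 - 1 = M := by ring
        have e3 : N + δ - δ = N := by ring
        rw [if_pos ⟨rfl, by omega, hraw ▸ hs⟩, e1, e2, e3]
      rw [shift_single_eq hT _ ⟨(J + 1, M + 1, N + δ, σt), ht⟩ h0 ?_, hcval, eSp_pos ht]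
      rintro ⟨⟨J', M', N', s'⟩, hk'⟩ hne hrk
      obtain ⟨hs1, hJ1, hP1⟩ := hgate _ hne
      simp only at hs1 hJ1 hP1
      rw [hrdef] at hrk
      simp only [dif_pos hP1, Subtype.mk.injEq, Prod.mk.injEq] at hrk
      obtain ⟨e1, e2, e3, -⟩ := hrk
      apply Subtype.ext
      simp only [Prod.mk.injEq]
      refine ⟨by omega, by omega, by omega, hs1⟩
    · rw [shift_single_zero hT _ ?_, eSp_neg ht, smul_zero]
      rintro ⟨⟨J', M', N', s'⟩, hk'⟩ hrk
      by_contra hne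
      obtain ⟨hs1, hJ1, hP1⟩ := hgate _ hne
      simp only at hs1 hJ1 hP1
      rw [hrdef] at hrk
      simp only [dif_pos hP1, Subtype.mk.injEq, Prod.mk.injEq] at hrk
      obtain ⟨e1, e2, e3, e4⟩ := hrk
      apply ht
      obtain rfl : J' = J + 1 := by omega
      obtain rfl : M' = M + 1 := by omega
      obtain rfl : N' = N + δ := by omega
      rw [← hs1]
      exact hk'
  · intro J M N s hss
    rw [eSp]
    split
    · next h =>
      apply shift_single_zero hT
      rintro ⟨⟨J', M', N', s'⟩, hk'⟩ hrk
      by_contra hne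
      obtain ⟨hs1, hJ1, hP1⟩ := hgate _ hne
      simp only at hs1 hJ1 hP1
      rw [hrdef] at hrk
      simp only [dif_pos hP1, Subtype.mk.injEq, Prod.mk.injEq] at hrk
      exact hss hrk.2.2.2.symm
    · exact map_zero T

lemma opMinus_exists (σs σt : Bool) (δ : ℤ) (w : ℕ → ℤ → ℤ → ℝ) (K : ℝ) (hK0 : 0 ≤ K)
    (hw : ∀ J M N, PSp (J, M, N, σs) → |w J M N| ≤ K) :
    ∃ T : HSp →L[ℂ] HSp,
      (∀ (J : ℕ) (M N : ℤ), PSp (J, M, N, σs) →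
        T (eSp J M N σs) = ((w J M N : ℝ) : ℂ) • eSp (J - 1) (M + 1) (N + δ) σt) ∧
      (∀ (J : ℕ) (M N : ℤ) (s : Bool), s ≠ σs → T (eSp J M N s) = 0) := by
  classical
  set c : SpIdx → ℂ := fun k =>
    if k.1.2.2.2 = σt ∧ PSp (k.1.1 + 1, k.1.2.1 - 1, k.1.2.2.1 - δ, σs)
    then ((w (k.1.1 + 1) (k.1.2.1 - 1) (k.1.2.2.1 - δ) : ℝ) : ℂ) else 0 with hcdef
  set r : SpIdx → SpIdx := fun k =>
    if h : PSp (k.1.1 + 1, k.1.2.1 - 1, k.1.2.2.1 - δ, σs) then ⟨_, h⟩ else k with hrdef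
  have hgate : ∀ k : SpIdx, c k ≠ 0 →
      k.1.2.2.2 = σt ∧ PSp (k.1.1 + 1, k.1.2.1 - 1, k.1.2.2.1 - δ, σs) := by
    intro k hk
    by_contra hg
    exact hk (by rw [hcdef]; exact if_neg hg)
  have hcb : ∀ k : SpIdx, ‖c k‖ ≤ K := by
    intro k
    rw [hcdef]
    dsimp only
    split
    · next hg =>
      rw [Complex.norm_real, Real.norm_eq_abs]
      exact hw _ _ _ hg.2
    · simpa using hK0
  have hinj : ∀ k k' : SpIdx, c k ≠ 0 → c k' ≠ 0 → r k = r k' → k = k' := by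
    rintro ⟨⟨J, M, N, s⟩, hk⟩ ⟨⟨J', M', N', s'⟩, hk'⟩ h h' hr
    obtain ⟨hs1, hP1⟩ := hgate _ h
    obtain ⟨hs2, hP2⟩ := hgate _ h'
    simp only at hs1 hP1 hs2 hP2
    rw [hrdef] at hr
    simp only [dif_pos hP1, dif_pos hP2, Subtype.mk.injEq, Prod.mk.injEq] at hr
    obtain ⟨e1, e2, e3, -⟩ := hr
    apply Subtype.ext
    simp only [Prod.mk.injEq]
    refine ⟨by omega, by omega, by omega, by rw [hs1, hs2]⟩
  obtain ⟨T, hT⟩ := shift_exists c r K hK0 hcb hinj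
  refine ⟨T, ?_, ?_⟩
  · intro J M N hs
    rw [eSp_pos hs]
    rcases Nat.eq_zero_or_pos J with rfl | hJpos
    · -- J = 0 : no valid target, and no preimage
      have hM0 : M = 0 := by
        obtain ⟨h1, h2, -⟩ := hs
        simp only [Nat.cast_zero, neg_zero] at h1 h2
        omega
      have hnt : ¬ PSp (0 - 1, M + 1, N + δ, σt) := by
        rintro ⟨-, h2, -⟩
        simp only [Nat.cast_zero] at h2
        omega
      rw [shift_single_zero hT _ ?_, eSp_neg hnt, smul_zero]
      rintro ⟨⟨J', M', N', s'⟩, hk'⟩ hrk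
      by_contra hne
      obtain ⟨hs1, hP1⟩ := hgate _ hne
      simp only at hs1 hP1
      rw [hrdef] at hrk
      simp only [dif_pos hP1, Subtype.mk.injEq, Prod.mk.injEq] at hrk
      omega
    · by_cases ht : PSp (J - 1, M + 1, N + δ, σt)
      · have hraw : (J - 1 + 1, M + 1 - 1, N + δ - δ, σs) = (J, M, N, σs) := by
          simp only [Prod.mk.injEq]
          refine ⟨by omega, by omega, by omega, trivial⟩
        have h0 : r ⟨(J - 1, M + 1, N + δ, σt), ht⟩ = ⟨(J, M, N, σs), hs⟩ := by
          rw [hrdef]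
          dsimp only
          rw [dif_pos (hraw ▸ hs)]
          exact Subtype.ext hraw
        have hcval : c ⟨(J - 1, M + 1, N + δ, σt), ht⟩ = ((w J M N : ℝ) : ℂ) := by
          rw [hcdef]
          dsimp only
          have e1 : J - 1 + 1 = J := by omega
          have e2 : M + 1 - 1 = M := by ring
          have e3 : N + δ - δ = N := by ring
          rw [if_pos ⟨rfl, hraw ▸ hs⟩, e1, e2, e3]
        rw [shift_single_eq hT _ ⟨(J - 1, M + 1, N + δ, σt), ht⟩ h0 ?_, hcval, eSp_pos ht]
        rintro ⟨⟨J', M', N', s'⟩, hk'⟩ hne hrk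
        obtain ⟨hs1, hP1⟩ := hgate _ hne
        simp only at hs1 hP1
        rw [hrdef] at hrk
        simp only [dif_pos hP1, Subtype.mk.injEq, Prod.mk.injEq] at hrk
        obtain ⟨e1, e2, e3, -⟩ := hrk
        apply Subtype.ext
        simp only [Prod.mk.injEq]
        refine ⟨by omega, by omega, by omega, hs1⟩
      · rw [shift_single_zero hT _ ?_, eSp_neg ht, smul_zero]
        rintro ⟨⟨J', M', N', s'⟩, hk'⟩ hrk
        by_contra hne
        obtain ⟨hs1, hP1⟩ := hgate _ hne
        simp only at hs1 hP1
        rw [hrdef] at hrk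
        simp only [dif_pos hP1, Subtype.mk.injEq, Prod.mk.injEq] at hrk
        obtain ⟨e1, e2, e3, e4⟩ := hrk
        apply ht
        obtain rfl : J' = J - 1 := by omega
        obtain rfl : M' = M + 1 := by omega
        obtain rfl : N' = N + δ := by omega
        rw [← hs1]
        exact hk'
  · intro J M N s hss
    rw [eSp]
    split
    · next h =>
      apply shift_single_zero hT
      rintro ⟨⟨J', M', N', s'⟩, hk'⟩ hrk
      by_contra hne
      obtain ⟨hs1, hP1⟩ := hgate _ hne
      simp only at hs1 hP1
      rw [hrdef] at hrk
      simp only [dif_pos hP1, Subtype.mk.injEq, Prod.mk.injEq] at hrk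
      exact hss hrk.2.2.2.symm
    · exact map_zero T

end SUq2Aux

namespace SUq2Aux

section Bounds

variable {q : ℝ}

lemma lam_pos (hq0 : 0 < q) (hq1 : q < 1) : 0 < q⁻¹ - q := by
  have h : q * (q⁻¹ - q) = 1 - q * q := by field_simp
  nlinarith [mul_pos hq0 hq0]

lemma one_sub_qq_pos (hq0 : 0 < q) (hq1 : q < 1) : 0 < 1 - q * q := by nlinarith

lemma qnum_eq (hq0 : 0 < q) (hq1 : q < 1) (x : ℝ) :
    qnum q x = (q ^ (-x) - q ^ x) / (q⁻¹ - q) := by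
  have hlam := lam_pos hq0 hq1
  have h1 : q - q⁻¹ ≠ 0 := by linarith
  have h2 : q⁻¹ - q ≠ 0 := ne_of_gt hlam
  rw [qnum, div_eq_div_iff h1 h2]
  ring

lemma qnum_le (hq0 : 0 < q) (hq1 : q < 1) (x : ℝ) :
    qnum q x ≤ q ^ (-x) / (q⁻¹ - q) := by
  have hlam := lam_pos hq0 hq1
  rw [qnum_eq hq0 hq1]
  have h : q ^ (-x) - q ^ x ≤ q ^ (-x) := by
    nlinarith [Real.rpow_pos_of_pos hq0 x]
  gcongr

lemma sqrt_qnum_le (hq0 : 0 < q) (hq1 : q < 1) (x : ℝ) :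
    Real.sqrt (qnum q x) ≤ q ^ (-x / 2) / Real.sqrt (q⁻¹ - q) := by
  have h := qnum_le hq0 hq1 x
  calc Real.sqrt (qnum q x) ≤ Real.sqrt (q ^ (-x) / (q⁻¹ - q)) := Real.sqrt_le_sqrt h
    _ = Real.sqrt (q ^ (-x)) / Real.sqrt (q⁻¹ - q) :=
        Real.sqrt_div (Real.rpow_pos_of_pos hq0 (-x)).le _
    _ = q ^ (-x / 2) / Real.sqrt (q⁻¹ - q) := by
        congr 1
        rw [Real.sqrt_eq_rpow, ← Real.rpow_mul hq0.le]
        ring_nf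

lemma qnum_lb (hq0 : 0 < q) (hq1 : q < 1) (x : ℝ) (hx : 1 ≤ x) :
    q ^ (-x) * (1 - q * q) / (q⁻¹ - q) ≤ qnum q x := by
  have hlam := lam_pos hq0 hq1
  rw [qnum_eq hq0 hq1]
  have e : q ^ (-x) * q ^ (2 * x) = q ^ x := by
    rw [← Real.rpow_add hq0]; ring_nf
  have h2x : q ^ (2 * x) ≤ q ^ (2 : ℝ) := by
    exact Real.rpow_le_rpow_of_exponent_ge hq0 hq1.le (by linarith)
  have hq2 : q ^ (2 : ℝ) = q * q := by
    rw [Real.rpow_two]; ring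
  have hpos : (0:ℝ) < q ^ (-x) := Real.rpow_pos_of_pos hq0 (-x)
  have h : q ^ (-x) * (1 - q * q) ≤ q ^ (-x) - q ^ x := by
    have := mul_le_mul_of_nonneg_left (hq2 ▸ h2x) hpos.le
    nlinarith
  gcongr

lemma qnum_pos (hq0 : 0 < q) (hq1 : q < 1) (x : ℝ) (hx : 1 ≤ x) :
    0 < qnum q x := by
  refine lt_of_lt_of_le ?_ (qnum_lb hq0 hq1 x hx)
  have h1 := one_sub_qq_pos hq0 hq1
  have h2 := lam_pos hq0 hq1
  have h3 : (0:ℝ) < q ^ (-x) := Real.rpow_pos_of_pos hq0 (-x)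
  positivity

lemma inv_qnum_le (hq0 : 0 < q) (hq1 : q < 1) (x : ℝ) (hx : 1 ≤ x) :
    (qnum q x)⁻¹ ≤ q ^ x * (q⁻¹ - q) / (1 - q * q) := by
  have hlam := lam_pos hq0 hq1
  have h2 := one_sub_qq_pos hq0 hq1
  have hlb := qnum_lb hq0 hq1 x hx
  have hrp : (0:ℝ) < q ^ (-x) := Real.rpow_pos_of_pos hq0 (-x)
  have hpos : 0 < q ^ (-x) * (1 - q * q) / (q⁻¹ - q) := by positivity
  calc (qnum q x)⁻¹ ≤ (q ^ (-x) * (1 - q * q) / (q⁻¹ - q))⁻¹ := by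
        apply inv_anti₀ hpos hlb
    _ = q ^ x * (q⁻¹ - q) / (1 - q * q) := by
        rw [Real.rpow_neg hq0.le]
        have hx0 : q ^ x ≠ 0 := ne_of_gt (Real.rpow_pos_of_pos hq0 x)
        field_simp

end Bounds

end SUq2Aux

namespace SUq2Aux

/-- Uniform constant bounding all coefficient matrices. -/
noncomputable def Kq (q : ℝ) : ℝ := (1 + (q⁻¹ - q)) / ((1 - q * q) * (1 - q * q))

lemma Kq_nonneg {q : ℝ} (hq0 : 0 < q) (hq1 : q < 1) : 0 ≤ Kq q := by
  have h1 := lam_pos hq0 hq1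
  have h2 := one_sub_qq_pos hq0 hq1
  unfold Kq
  positivity

section Master

variable {q : ℝ}

lemma master1 (hq0 : 0 < q) (hq1 : q < 1) (p r A B C E X : ℝ)
    (hX : |X| ≤ q ^ r * Real.sqrt (qnum q B))
    (hC : 1 ≤ C) (hE : E ≤ p + r + (-(A / 2)) + (-(B / 2)) + C) :
    |q ^ p * Real.sqrt (qnum q A) * (X / qnum q C)| ≤ q ^ E * Kq q := by
  have hlam := lam_pos hq0 hq1
  have h2 := one_sub_qq_pos hq0 hq1
  have hCpos := qnum_pos hq0 hq1 C hC
  have hsl : 0 < Real.sqrt (q⁻¹ - q) := Real.sqrt_pos.2 hlam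
  have hrp : ∀ y : ℝ, (0:ℝ) < q ^ y := fun y => Real.rpow_pos_of_pos hq0 y
  have habs : |q ^ p * Real.sqrt (qnum q A) * (X / qnum q C)|
      = q ^ p * Real.sqrt (qnum q A) * (|X| / qnum q C) := by
    rw [abs_mul, abs_mul, abs_div, abs_of_pos (hrp p),
      abs_of_nonneg (Real.sqrt_nonneg _), abs_of_pos hCpos]
  rw [habs]
  have hA := sqrt_qnum_le hq0 hq1 A
  have hB := sqrt_qnum_le hq0 hq1 B
  have hCi := inv_qnum_le hq0 hq1 C hC
  have step1 : |X| / qnum q C ≤ (q ^ r * (q ^ (-B / 2) / Real.sqrt (q⁻¹ - q)))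
      * (q ^ C * (q⁻¹ - q) / (1 - q * q)) := by
    rw [div_eq_mul_inv]
    apply mul_le_mul (hX.trans ?_) hCi (inv_nonneg.2 hCpos.le) (by positivity)
    exact mul_le_mul_of_nonneg_left hB (hrp r).le
  have step2 : q ^ p * Real.sqrt (qnum q A) * (|X| / qnum q C)
      ≤ q ^ p * (q ^ (-A / 2) / Real.sqrt (q⁻¹ - q)) *
        ((q ^ r * (q ^ (-B / 2) / Real.sqrt (q⁻¹ - q))) * (q ^ C * (q⁻¹ - q) / (1 - q * q))) := by
    apply mul_le_mul ?_ step1 (by positivity) (by positivity)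
    exact mul_le_mul_of_nonneg_left hA (hrp p).le
  refine step2.trans ?_
  have hmm : Real.sqrt (q⁻¹ - q) * Real.sqrt (q⁻¹ - q) = q⁻¹ - q :=
    Real.mul_self_sqrt hlam.le
  have heq : q ^ p * (q ^ (-A / 2) / Real.sqrt (q⁻¹ - q)) *
        ((q ^ r * (q ^ (-B / 2) / Real.sqrt (q⁻¹ - q))) * (q ^ C * (q⁻¹ - q) / (1 - q * q)))
      = q ^ (p + r + (-(A / 2)) + (-(B / 2)) + C) *
        ((q⁻¹ - q) / (Real.sqrt (q⁻¹ - q) * Real.sqrt (q⁻¹ - q)) / (1 - q * q)) := by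
    rw [Real.rpow_add hq0, Real.rpow_add hq0, Real.rpow_add hq0, Real.rpow_add hq0]
    ring
  rw [heq, hmm, div_self (ne_of_gt hlam)]
  have hq1' : q ^ (p + r + (-(A / 2)) + (-(B / 2)) + C) ≤ q ^ E :=
    Real.rpow_le_rpow_of_exponent_ge hq0 hq1.le hE
  have hK : 1 / (1 - q * q) ≤ Kq q := by
    unfold Kq
    rw [div_le_div_iff₀ h2 (by positivity)]
    nlinarith
  calc q ^ (p + r + (-(A / 2)) + (-(B / 2)) + C) * (1 / (1 - q * q))
      ≤ q ^ E * Kq q := by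
        apply mul_le_mul hq1' hK (by positivity) (hrp E).le

lemma master2 (hq0 : 0 < q) (hq1 : q < 1) (p r A B C D E X : ℝ)
    (hX : |X| ≤ q ^ r * Real.sqrt (qnum q B))
    (hC : 1 ≤ C) (hD : 1 ≤ D) (hE : E ≤ p + r + (-(A / 2)) + (-(B / 2)) + C + D) :
    |q ^ p * Real.sqrt (qnum q A) * (X / (qnum q C * qnum q D))| ≤ q ^ E * Kq q := by
  have hlam := lam_pos hq0 hq1
  have h2 := one_sub_qq_pos hq0 hq1
  have hCpos := qnum_pos hq0 hq1 C hC
  have hDpos := qnum_pos hq0 hq1 D hD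
  have hsl : 0 < Real.sqrt (q⁻¹ - q) := Real.sqrt_pos.2 hlam
  have hrp : ∀ y : ℝ, (0:ℝ) < q ^ y := fun y => Real.rpow_pos_of_pos hq0 y
  have habs : |q ^ p * Real.sqrt (qnum q A) * (X / (qnum q C * qnum q D))|
      = q ^ p * Real.sqrt (qnum q A) * (|X| / (qnum q C * qnum q D)) := by
    rw [abs_mul, abs_mul, abs_div, abs_of_pos (hrp p),
      abs_of_nonneg (Real.sqrt_nonneg _), abs_of_pos (mul_pos hCpos hDpos)]
  rw [habs]
  have hA := sqrt_qnum_le hq0 hq1 A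
  have hB := sqrt_qnum_le hq0 hq1 B
  have hCi := inv_qnum_le hq0 hq1 C hC
  have hDi := inv_qnum_le hq0 hq1 D hD
  have hprod : (qnum q C * qnum q D)⁻¹ ≤
      (q ^ C * (q⁻¹ - q) / (1 - q * q)) * (q ^ D * (q⁻¹ - q) / (1 - q * q)) := by
    rw [mul_inv]
    exact mul_le_mul hCi hDi (inv_nonneg.2 hDpos.le) (by positivity)
  have step1 : |X| / (qnum q C * qnum q D) ≤ (q ^ r * (q ^ (-B / 2) / Real.sqrt (q⁻¹ - q)))
      * ((q ^ C * (q⁻¹ - q) / (1 - q * q)) * (q ^ D * (q⁻¹ - q) / (1 - q * q))) := by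
    rw [div_eq_mul_inv]
    apply mul_le_mul (hX.trans ?_) hprod (inv_nonneg.2 (mul_pos hCpos hDpos).le) (by positivity)
    exact mul_le_mul_of_nonneg_left hB (hrp r).le
  have step2 : q ^ p * Real.sqrt (qnum q A) * (|X| / (qnum q C * qnum q D))
      ≤ q ^ p * (q ^ (-A / 2) / Real.sqrt (q⁻¹ - q)) *
        ((q ^ r * (q ^ (-B / 2) / Real.sqrt (q⁻¹ - q))) *
          ((q ^ C * (q⁻¹ - q) / (1 - q * q)) * (q ^ D * (q⁻¹ - q) / (1 - q * q)))) := by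
    apply mul_le_mul ?_ step1 (by positivity) (by positivity)
    exact mul_le_mul_of_nonneg_left hA (hrp p).le
  refine step2.trans ?_
  have hmm : Real.sqrt (q⁻¹ - q) * Real.sqrt (q⁻¹ - q) = q⁻¹ - q :=
    Real.mul_self_sqrt hlam.le
  have heq : q ^ p * (q ^ (-A / 2) / Real.sqrt (q⁻¹ - q)) *
        ((q ^ r * (q ^ (-B / 2) / Real.sqrt (q⁻¹ - q))) *
          ((q ^ C * (q⁻¹ - q) / (1 - q * q)) * (q ^ D * (q⁻¹ - q) / (1 - q * q))))
      = q ^ (p + r + (-(A / 2)) + (-(B / 2)) + C + D) *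
        (((q⁻¹ - q) / (Real.sqrt (q⁻¹ - q) * Real.sqrt (q⁻¹ - q))) *
          ((q⁻¹ - q) / (1 - q * q) / (1 - q * q))) := by
    rw [Real.rpow_add hq0, Real.rpow_add hq0, Real.rpow_add hq0, Real.rpow_add hq0,
      Real.rpow_add hq0]
    ring
  rw [heq, hmm, div_self (ne_of_gt hlam), one_mul, div_div]
  have hq1' : q ^ (p + r + (-(A / 2)) + (-(B / 2)) + C + D) ≤ q ^ E :=
    Real.rpow_le_rpow_of_exponent_ge hq0 hq1.le hE
  have hK : (q⁻¹ - q) / ((1 - q * q) * (1 - q * q)) ≤ Kq q := by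
    unfold Kq
    gcongr
    linarith
  exact mul_le_mul hq1' hK (by positivity) (hrp E).le

end Master

end SUq2Aux

namespace SUq2Aux

lemma PSp_true_bounds {J : ℕ} {M N : ℤ} (h : PSp (J, M, N, true)) :
    -((J:ℝ)) ≤ (M:ℝ) ∧ (M:ℝ) ≤ (J:ℝ) ∧ -((J:ℝ)) - 1 ≤ (N:ℝ) ∧ (N:ℝ) ≤ (J:ℝ) + 1 := by
  obtain ⟨h1, h2, -, -, h5⟩ := h
  simp only [if_pos rfl] at h5
  obtain ⟨h3, h4⟩ := h5
  refine ⟨?_, ?_, ?_, ?_⟩ <;> [exact_mod_cast h1; exact_mod_cast h2;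
    exact_mod_cast h3; exact_mod_cast h4]

lemma PSp_false_bounds {J : ℕ} {M N : ℤ} (h : PSp (J, M, N, false)) :
    1 ≤ (J:ℝ) ∧ -((J:ℝ)) ≤ (M:ℝ) ∧ (M:ℝ) ≤ (J:ℝ) ∧
      -((J:ℝ)) + 1 ≤ (N:ℝ) ∧ (N:ℝ) ≤ (J:ℝ) - 1 := by
  obtain ⟨h1, h2, -, -, h5⟩ := h
  simp only [Bool.false_eq_true, if_false] at h5
  obtain ⟨h0, h3, h4⟩ := h5
  refine ⟨?_, ?_, ?_, ?_, ?_⟩ <;> [exact_mod_cast h0; exact_mod_cast h1;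
    exact_mod_cast h2; exact_mod_cast h3; exact_mod_cast h4]

section CoeffBounds

variable {q : ℝ}

lemma cross_weak {w : ℝ} {J : ℕ} (hq0 : 0 < q) (hq1 : q < 1)
    (h : |w| ≤ q ^ (J:ℝ) * Kq q) : |w| ≤ Kq q := by
  refine h.trans ?_
  apply mul_le_of_le_one_left (Kq_nonneg hq0 hq1)
  exact Real.rpow_le_one hq0.le hq1.le (Nat.cast_nonneg J)

lemma bd_ap11 (hq0 : 0 < q) (hq1 : q < 1) (J : ℕ) (M N : ℤ) (h : PSp (J, M, N, true)) :
    |ap11 q (jv J) (hv M) (hv N)| ≤ Kq q := by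
  obtain ⟨h1, h2, h3, h4⟩ := PSp_true_bounds h
  have hJ : (0:ℝ) ≤ (J:ℝ) := Nat.cast_nonneg J
  have key := master1 hq0 hq1 ((1/2 - hv M - hv N)/2) (jv J + 1/2) (jv J + hv M + 1)
    (jv J + hv N + 3/2) (2 * jv J + 2) 0
    (q ^ (jv J + 1/2) * Real.sqrt (qnum q (jv J + hv N + 3/2)))
    (le_of_eq (abs_of_nonneg (by positivity)))
    (by unfold jv; linarith)
    (by unfold jv hv; linarith)
  rw [Real.rpow_zero, one_mul] at key
  unfold ap11
  exact key

lemma bd_ap21 (hq0 : 0 < q) (hq1 : q < 1) (J : ℕ) (M N : ℤ) (h : PSp (J, M, N, true)) :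
    |ap21 q (jv J) (hv M) (hv N)| ≤ q ^ (J:ℝ) * Kq q := by
  obtain ⟨h1, h2, h3, h4⟩ := PSp_true_bounds h
  have hJ : (0:ℝ) ≤ (J:ℝ) := Nat.cast_nonneg J
  have key := master2 hq0 hq1 ((1/2 - hv M - hv N)/2) (-(1:ℝ)/2) (jv J + hv M + 1)
    (jv J - hv N + 1/2) (2 * jv J + 1) (2 * jv J + 2) ((J:ℝ))
    (q ^ (-(1:ℝ)/2) * Real.sqrt (qnum q (jv J - hv N + 1/2)))
    (le_of_eq (abs_of_nonneg (by positivity)))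
    (by unfold jv; linarith) (by unfold jv; linarith)
    (by unfold jv hv; linarith)
  unfold ap21
  exact key

lemma bd_ap22 (hq0 : 0 < q) (hq1 : q < 1) (J : ℕ) (M N : ℤ) (h : PSp (J, M, N, false)) :
    |ap22 q (jv J) (hv M) (hv N)| ≤ Kq q := by
  obtain ⟨h0, h1, h2, h3, h4⟩ := PSp_false_bounds h
  have key := master1 hq0 hq1 ((1/2 - hv M - hv N)/2) (jv J) (jv J + hv M + 1)
    (jv J + hv N + 1/2) (2 * jv J + 1) 0
    (q ^ (jv J) * Real.sqrt (qnum q (jv J + hv N + 1/2)))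
    (le_of_eq (abs_of_nonneg (by positivity)))
    (by unfold jv; linarith)
    (by unfold jv hv; linarith)
  rw [Real.rpow_zero, one_mul] at key
  unfold ap22
  exact key

lemma bd_am11 (hq0 : 0 < q) (hq1 : q < 1) (J : ℕ) (M N : ℤ) (h : PSp (J, M, N, true)) :
    |am11 q (jv J) (hv M) (hv N)| ≤ Kq q := by
  obtain ⟨h1, h2, h3, h4⟩ := PSp_true_bounds h
  have hJ : (0:ℝ) ≤ (J:ℝ) := Nat.cast_nonneg J
  have key := master1 hq0 hq1 ((1/2 - hv M - hv N)/2) (-jv J - 1) (jv J - hv M)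
    (jv J - hv N + 1/2) (2 * jv J + 1) 0
    (q ^ (-jv J - 1) * Real.sqrt (qnum q (jv J - hv N + 1/2)))
    (le_of_eq (abs_of_nonneg (by positivity)))
    (by unfold jv; linarith)
    (by unfold jv hv; linarith)
  rw [Real.rpow_zero, one_mul] at key
  unfold am11
  exact key

lemma bd_am12 (hq0 : 0 < q) (hq1 : q < 1) (J : ℕ) (M N : ℤ) (h : PSp (J, M, N, false)) :
    |am12 q (jv J) (hv M) (hv N)| ≤ q ^ (J:ℝ) * Kq q := by
  obtain ⟨h0, h1, h2, h3, h4⟩ := PSp_false_bounds h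
  have key := master2 hq0 hq1 ((1/2 - hv M - hv N)/2) (-(1:ℝ)/2) (jv J - hv M)
    (jv J + hv N + 1/2) (2 * jv J) (2 * jv J + 1) ((J:ℝ))
    (-(q ^ (-(1:ℝ)/2)) * Real.sqrt (qnum q (jv J + hv N + 1/2)))
    (le_of_eq (by
      rw [abs_mul, abs_neg, abs_of_pos (Real.rpow_pos_of_pos hq0 _),
        abs_of_nonneg (Real.sqrt_nonneg _)]))
    (by unfold jv; linarith) (by unfold jv; linarith)
    (by unfold jv hv; linarith)
  unfold am12
  exact key

lemma bd_am22 (hq0 : 0 < q) (hq1 : q < 1) (J : ℕ) (M N : ℤ) (h : PSp (J, M, N, false)) :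
    |am22 q (jv J) (hv M) (hv N)| ≤ Kq q := by
  obtain ⟨h0, h1, h2, h3, h4⟩ := PSp_false_bounds h
  have key := master1 hq0 hq1 ((1/2 - hv M - hv N)/2) (-jv J - 1/2) (jv J - hv M)
    (jv J - hv N - 1/2) (2 * jv J) 0
    (q ^ (-jv J - 1/2) * Real.sqrt (qnum q (jv J - hv N - 1/2)))
    (le_of_eq (abs_of_nonneg (by positivity)))
    (by unfold jv; linarith)
    (by unfold jv hv; linarith)
  rw [Real.rpow_zero, one_mul] at key
  unfold am22
  exact key

lemma bd_bp11 (hq0 : 0 < q) (hq1 : q < 1) (J : ℕ) (M N : ℤ) (h : PSp (J, M, N, true)) :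
    |bp11 q (jv J) (hv M) (hv N)| ≤ Kq q := by
  obtain ⟨h1, h2, h3, h4⟩ := PSp_true_bounds h
  have hJ : (0:ℝ) ≤ (J:ℝ) := Nat.cast_nonneg J
  have key := master1 hq0 hq1 ((-hv M - hv N - 1/2)/2) 0 (jv J + hv M + 1)
    (jv J - hv N + 3/2) (2 * jv J + 2) 0
    (Real.sqrt (qnum q (jv J - hv N + 3/2)))
    (by rw [Real.rpow_zero, one_mul, abs_of_nonneg (Real.sqrt_nonneg _)])
    (by unfold jv; linarith)
    (by unfold jv hv; linarith)
  rw [Real.rpow_zero, one_mul] at key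
  unfold bp11
  exact key

lemma bd_bp21 (hq0 : 0 < q) (hq1 : q < 1) (J : ℕ) (M N : ℤ) (h : PSp (J, M, N, true)) :
    |bp21 q (jv J) (hv M) (hv N)| ≤ q ^ (J:ℝ) * Kq q := by
  obtain ⟨h1, h2, h3, h4⟩ := PSp_true_bounds h
  have hJ : (0:ℝ) ≤ (J:ℝ) := Nat.cast_nonneg J
  have key := master2 hq0 hq1 ((-hv M - hv N - 1/2)/2) (jv J + 1) (jv J + hv M + 1)
    (jv J + hv N + 1/2) (2 * jv J + 1) (2 * jv J + 2) ((J:ℝ))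
    (-(q ^ (jv J + 1)) * Real.sqrt (qnum q (jv J + hv N + 1/2)))
    (le_of_eq (by
      rw [abs_mul, abs_neg, abs_of_pos (Real.rpow_pos_of_pos hq0 _),
        abs_of_nonneg (Real.sqrt_nonneg _)]))
    (by unfold jv; linarith) (by unfold jv; linarith)
    (by unfold jv hv; linarith)
  unfold bp21
  exact key

lemma bd_bp22 (hq0 : 0 < q) (hq1 : q < 1) (J : ℕ) (M N : ℤ) (h : PSp (J, M, N, false)) :
    |bp22 q (jv J) (hv M) (hv N)| ≤ Kq q := by
  obtain ⟨h0, h1, h2, h3, h4⟩ := PSp_false_bounds h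
  have key := master1 hq0 hq1 ((-hv M - hv N - 1/2)/2) ((1:ℝ)/2) (jv J + hv M + 1)
    (jv J - hv N + 1/2) (2 * jv J + 1) 0
    (q ^ ((1:ℝ)/2) * Real.sqrt (qnum q (jv J - hv N + 1/2)))
    (le_of_eq (abs_of_nonneg (by positivity)))
    (by unfold jv; linarith)
    (by unfold jv hv; linarith)
  rw [Real.rpow_zero, one_mul] at key
  unfold bp22
  exact key

lemma bd_bm11 (hq0 : 0 < q) (hq1 : q < 1) (J : ℕ) (M N : ℤ) (h : PSp (J, M, N, true)) :
    |bm11 q (jv J) (hv M) (hv N)| ≤ Kq q := by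
  obtain ⟨h1, h2, h3, h4⟩ := PSp_true_bounds h
  have hJ : (0:ℝ) ≤ (J:ℝ) := Nat.cast_nonneg J
  have key := master1 hq0 hq1 ((-hv M - hv N - 1/2)/2) ((1:ℝ)/2) (jv J - hv M)
    (jv J + hv N + 1/2) (2 * jv J + 1) 0
    (-(q ^ ((1:ℝ)/2)) * Real.sqrt (qnum q (jv J + hv N + 1/2)))
    (le_of_eq (by
      rw [abs_mul, abs_neg, abs_of_pos (Real.rpow_pos_of_pos hq0 _),
        abs_of_nonneg (Real.sqrt_nonneg _)]))
    (by unfold jv; linarith)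
    (by unfold jv hv; linarith)
  rw [Real.rpow_zero, one_mul] at key
  unfold bm11
  exact key

lemma bd_bm12 (hq0 : 0 < q) (hq1 : q < 1) (J : ℕ) (M N : ℤ) (h : PSp (J, M, N, false)) :
    |bm12 q (jv J) (hv M) (hv N)| ≤ q ^ (J:ℝ) * Kq q := by
  obtain ⟨h0, h1, h2, h3, h4⟩ := PSp_false_bounds h
  have key := master2 hq0 hq1 ((-hv M - hv N - 1/2)/2) (-jv J) (jv J - hv M)
    (jv J - hv N + 1/2) (2 * jv J) (2 * jv J + 1) ((J:ℝ))
    (-(q ^ (-jv J)) * Real.sqrt (qnum q (jv J - hv N + 1/2)))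
    (le_of_eq (by
      rw [abs_mul, abs_neg, abs_of_pos (Real.rpow_pos_of_pos hq0 _),
        abs_of_nonneg (Real.sqrt_nonneg _)]))
    (by unfold jv; linarith) (by unfold jv; linarith)
    (by unfold jv hv; linarith)
  unfold bm12
  exact key

lemma bd_bm22 (hq0 : 0 < q) (hq1 : q < 1) (J : ℕ) (M N : ℤ) (h : PSp (J, M, N, false)) :
    |bm22 q (jv J) (hv M) (hv N)| ≤ Kq q := by
  obtain ⟨h0, h1, h2, h3, h4⟩ := PSp_false_bounds h
  have key := master1 hq0 hq1 ((-hv M - hv N - 1/2)/2) 0 (jv J - hv M)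
    (jv J + hv N - 1/2) (2 * jv J) 0
    (-(Real.sqrt (qnum q (jv J + hv N - 1/2))))
    (by rw [Real.rpow_zero, one_mul, abs_neg, abs_of_nonneg (Real.sqrt_nonneg _)])
    (by unfold jv; linarith)
    (by unfold jv hv; linarith)
  rw [Real.rpow_zero, one_mul] at key
  unfold bm22
  exact key

end CoeffBounds

end SUq2Aux

namespace SUq2Aux

section Comm

variable {q : ℝ}

lemma geom_bound (hq0 : 0 < q) (hq1 : q < 1) (n : ℕ) :
    ((n:ℝ) + 1) * q ^ (n:ℝ) ≤ 1 / (1 - q) := by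
  rw [Real.rpow_natCast]
  have h1 : ((n:ℝ) + 1) * q ^ n = ∑ _k ∈ Finset.range (n+1), q ^ n := by
    rw [Finset.sum_const, Finset.card_range, nsmul_eq_mul]
    push_cast
    ring
  have h2 : ∑ _k ∈ Finset.range (n+1), q ^ n ≤ ∑ k ∈ Finset.range (n+1), q ^ k := by
    apply Finset.sum_le_sum
    intro k hk
    exact pow_le_pow_of_le_one hq0.le hq1.le (Nat.lt_succ_iff.1 (Finset.mem_range.1 hk))
  have h3 : ∑ k ∈ Finset.range (n+1), q ^ k ≤ 1 / (1 - q) := by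
    rw [le_div_iff₀ (by linarith)]
    have hg := geom_sum_mul q (n+1)
    have : (∑ k ∈ Finset.range (n+1), q ^ k) * (1 - q) = 1 - q ^ (n+1) := by
      have := geom_sum_mul q (n+1)
      nlinarith [this]
    rw [this]
    nlinarith [pow_nonneg hq0.le (n+1)]
  linarith

/-- The sum of absolute values of the Dirac eigenvalue slopes/offsets. -/
noncomputable def Lc (c1u c2u c1d c2d : ℝ) : ℝ := |c1u| + |c2u| + |c1d| + |c2d|

lemma Lc_nonneg (c1u c2u c1d c2d : ℝ) : 0 ≤ Lc c1u c2u c1d c2d := by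
  unfold Lc; positivity

/-- Uniform bound for commutator weights. -/
noncomputable def KC (q c1u c2u c1d c2d : ℝ) : ℝ :=
  Lc c1u c2u c1d c2d * Kq q / (1 - q)

lemma KC_nonneg (hq0 : 0 < q) (hq1 : q < 1) (c1u c2u c1d c2d : ℝ) :
    0 ≤ KC q c1u c2u c1d c2d := by
  unfold KC
  have := Kq_nonneg hq0 hq1
  have := Lc_nonneg c1u c2u c1d c2d
  have : (0:ℝ) < 1 - q := by linarith
  positivity

lemma comm_same (hq0 : 0 < q) (hq1 : q < 1) (c1u c2u c1d c2d : ℝ) (Δ w : ℝ)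
    (hΔ : |Δ| ≤ Lc c1u c2u c1d c2d) (hw : |w| ≤ Kq q) :
    |Δ * w| ≤ KC q c1u c2u c1d c2d := by
  have hL := Lc_nonneg c1u c2u c1d c2d
  have hK := Kq_nonneg hq0 hq1
  have h1q : (0:ℝ) < 1 - q := by linarith
  rw [abs_mul]
  calc |Δ| * |w| ≤ Lc c1u c2u c1d c2d * Kq q :=
        mul_le_mul hΔ hw (abs_nonneg _) hL
    _ ≤ KC q c1u c2u c1d c2d := by
        unfold KC
        rw [le_div_iff₀ h1q]
        nlinarith [mul_nonneg hL hK]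

lemma comm_cross (hq0 : 0 < q) (hq1 : q < 1) (c1u c2u c1d c2d : ℝ) (J : ℕ) (Δ w : ℝ)
    (hΔ : |Δ| ≤ Lc c1u c2u c1d c2d * ((J:ℝ) + 1)) (hw : |w| ≤ q ^ (J:ℝ) * Kq q) :
    |Δ * w| ≤ KC q c1u c2u c1d c2d := by
  have hL := Lc_nonneg c1u c2u c1d c2d
  have hK := Kq_nonneg hq0 hq1
  have h1q : (0:ℝ) < 1 - q := by linarith
  have hg := geom_bound hq0 hq1 J
  have hrp : (0:ℝ) ≤ q ^ (J:ℝ) := (Real.rpow_pos_of_pos hq0 _).le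
  rw [abs_mul]
  calc |Δ| * |w| ≤ (Lc c1u c2u c1d c2d * ((J:ℝ) + 1)) * (q ^ (J:ℝ) * Kq q) :=
        mul_le_mul hΔ hw (abs_nonneg _) (by positivity)
    _ = (((J:ℝ) + 1) * q ^ (J:ℝ)) * (Lc c1u c2u c1d c2d * Kq q) := by ring
    _ ≤ (1 / (1 - q)) * (Lc c1u c2u c1d c2d * Kq q) :=
        mul_le_mul_of_nonneg_right hg (by positivity)
    _ = KC q c1u c2u c1d c2d := by unfold KC; ring

lemma abs_dd_same (c1u c2u c1d c2d : ℝ) (J J' : ℕ) (s : Bool)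
    (h1 : J ≤ J' + 1) (h2 : J' ≤ J + 1) :
    |dSp c1u c2u c1d c2d J' s - dSp c1u c2u c1d c2d J s| ≤ Lc c1u c2u c1d c2d := by
  have h1' : (J:ℝ) ≤ (J':ℝ) + 1 := by exact_mod_cast h1
  have h2' : (J':ℝ) ≤ (J:ℝ) + 1 := by exact_mod_cast h2
  have hd : |(J':ℝ) - (J:ℝ)| ≤ 2 := by
    rw [abs_le]
    constructor <;> linarith
  have hdd : |((J':ℝ) - (J:ℝ))/2| ≤ 1 := by
    rw [abs_div, (by norm_num : |(2:ℝ)| = 2)]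
    linarith
  unfold Lc
  cases s
  · simp only [dSp, if_neg (by simp : ¬ (false = true))]
    have e : c1d * ((J':ℝ)/2) + c2d - (c1d * ((J:ℝ)/2) + c2d)
        = c1d * (((J':ℝ) - (J:ℝ))/2) := by ring
    rw [e, abs_mul]
    nlinarith [abs_nonneg c1d, abs_nonneg c1u, abs_nonneg c2u, abs_nonneg c2d,
      abs_nonneg (((J':ℝ) - (J:ℝ))/2)]
  · simp only [dSp, if_true]
    have e : c1u * ((J':ℝ)/2) + c2u - (c1u * ((J:ℝ)/2) + c2u)
        = c1u * (((J':ℝ) - (J:ℝ))/2) := by ring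
    rw [e, abs_mul]
    nlinarith [abs_nonneg c1d, abs_nonneg c1u, abs_nonneg c2u, abs_nonneg c2d,
      abs_nonneg (((J':ℝ) - (J:ℝ))/2)]

lemma abs_dd_cross (c1u c2u c1d c2d : ℝ) (J J' : ℕ) (s s' : Bool) (hss : s ≠ s')
    (hJ' : J' ≤ J + 1) :
    |dSp c1u c2u c1d c2d J' s' - dSp c1u c2u c1d c2d J s|
      ≤ Lc c1u c2u c1d c2d * ((J:ℝ) + 1) := by
  have hJ'r : (J':ℝ) ≤ (J:ℝ) + 1 := by exact_mod_cast hJ'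
  have hJ0 : (0:ℝ) ≤ (J:ℝ) := Nat.cast_nonneg J
  have hJ0' : (0:ℝ) ≤ (J':ℝ) := Nat.cast_nonneg J'
  have key : ∀ a b a' b' : ℝ, |a| + |b| + |a'| + |b'| ≤ Lc c1u c2u c1d c2d →
      |a * ((J':ℝ)/2) + b - (a' * ((J:ℝ)/2) + b')| ≤ Lc c1u c2u c1d c2d * ((J:ℝ) + 1) := by
    intro a b a' b' hsum
    have t1 : |a * ((J':ℝ)/2) + b - (a' * ((J:ℝ)/2) + b')|
        ≤ |a| * ((J':ℝ)/2) + |b| + |a'| * ((J:ℝ)/2) + |b'| := by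
      calc |a * ((J':ℝ)/2) + b - (a' * ((J:ℝ)/2) + b')|
          ≤ |a * ((J':ℝ)/2) + b| + |a' * ((J:ℝ)/2) + b'| := abs_sub _ _
        _ ≤ (|a * ((J':ℝ)/2)| + |b|) + (|a' * ((J:ℝ)/2)| + |b'|) := by
            gcongr <;> exact abs_add_le _ _
        _ = |a| * ((J':ℝ)/2) + |b| + (|a'| * ((J:ℝ)/2) + |b'|) := by
            rw [abs_mul, abs_mul, abs_of_nonneg (by positivity : (0:ℝ) ≤ (J':ℝ)/2),
              abs_of_nonneg (by positivity : (0:ℝ) ≤ (J:ℝ)/2)]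
        _ = |a| * ((J':ℝ)/2) + |b| + |a'| * ((J:ℝ)/2) + |b'| := by ring
    refine t1.trans ?_
    have hL := Lc_nonneg c1u c2u c1d c2d
    nlinarith [abs_nonneg a, abs_nonneg b, abs_nonneg a', abs_nonneg b']
  cases s <;> cases s' <;> first
    | exact absurd rfl hss
    | · simp only [dSp, Bool.false_eq_true, if_true, if_false]
        apply key
        unfold Lc
        nlinarith [abs_nonneg c1u, abs_nonneg c2u, abs_nonneg c1d, abs_nonneg c2d]

end Comm

end SUq2Aux

open SUq2Aux

/-- The equivariant spinorial representation `a, b` of `SU_q(2)` extends to bounded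
operators on the spinor Hilbert space, and the commutators with the diagonal Dirac
operator `D|jμn↑⟩ = (c₁↑j + c₂↑)|jμn↑⟩`, `D|jμn↓⟩ = (c₁↓j + c₂↓)|jμn↓⟩`, defined on
finitely supported vectors, extend to bounded operators. -/
theorem suq2_spinor_rep_bounded_commutators (q : ℝ) (hq0 : 0 < q) (hq1 : q < 1)
    (c1u c2u c1d c2d : ℝ) :
    ∃ a b : HSp →L[ℂ] HSp,
      (∀ (J : ℕ) (M N : ℤ), PSp (J, M, N, true) →
        a (eSp J M N true) =
          ((ap11 q (jv J) (hv M) (hv N) : ℝ) : ℂ) • eSp (J + 1) (M + 1) (N + 1) true +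
            ((ap21 q (jv J) (hv M) (hv N) : ℝ) : ℂ) • eSp (J + 1) (M + 1) (N + 1) false +
            ((am11 q (jv J) (hv M) (hv N) : ℝ) : ℂ) • eSp (J - 1) (M + 1) (N + 1) true +
            ((am21 q (jv J) (hv M) (hv N) : ℝ) : ℂ) • eSp (J - 1) (M + 1) (N + 1) false) ∧
      (∀ (J : ℕ) (M N : ℤ), PSp (J, M, N, false) →
        a (eSp J M N false) =
          ((ap12 q (jv J) (hv M) (hv N) : ℝ) : ℂ) • eSp (J + 1) (M + 1) (N + 1) true +
            ((ap22 q (jv J) (hv M) (hv N) : ℝ) : ℂ) • eSp (J + 1) (M + 1) (N + 1) false +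
            ((am12 q (jv J) (hv M) (hv N) : ℝ) : ℂ) • eSp (J - 1) (M + 1) (N + 1) true +
            ((am22 q (jv J) (hv M) (hv N) : ℝ) : ℂ) • eSp (J - 1) (M + 1) (N + 1) false) ∧
      (∀ (J : ℕ) (M N : ℤ), PSp (J, M, N, true) →
        b (eSp J M N true) =
          ((bp11 q (jv J) (hv M) (hv N) : ℝ) : ℂ) • eSp (J + 1) (M + 1) (N - 1) true +
            ((bp21 q (jv J) (hv M) (hv N) : ℝ) : ℂ) • eSp (J + 1) (M + 1) (N - 1) false +
            ((bm11 q (jv J) (hv M) (hv N) : ℝ) : ℂ) • eSp (J - 1) (M + 1) (N - 1) true +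
            ((bm21 q (jv J) (hv M) (hv N) : ℝ) : ℂ) • eSp (J - 1) (M + 1) (N - 1) false) ∧
      (∀ (J : ℕ) (M N : ℤ), PSp (J, M, N, false) →
        b (eSp J M N false) =
          ((bp12 q (jv J) (hv M) (hv N) : ℝ) : ℂ) • eSp (J + 1) (M + 1) (N - 1) true +
            ((bp22 q (jv J) (hv M) (hv N) : ℝ) : ℂ) • eSp (J + 1) (M + 1) (N - 1) false +
            ((bm12 q (jv J) (hv M) (hv N) : ℝ) : ℂ) • eSp (J - 1) (M + 1) (N - 1) true +
            ((bm22 q (jv J) (hv M) (hv N) : ℝ) : ℂ) • eSp (J - 1) (M + 1) (N - 1) false) ∧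
      (∀ Dl : HSp →ₗ[ℂ] HSp,
        (∀ (J : ℕ) (M N : ℤ) (s : Bool), PSp (J, M, N, s) →
          Dl (eSp J M N s) = ((dSp c1u c2u c1d c2d J s : ℝ) : ℂ) • eSp J M N s) →
        (∃ Ca : HSp →L[ℂ] HSp, ∀ (J : ℕ) (M N : ℤ) (s : Bool), PSp (J, M, N, s) →
          Ca (eSp J M N s) = Dl (a (eSp J M N s)) - a (Dl (eSp J M N s))) ∧
        (∃ Cb : HSp →L[ℂ] HSp, ∀ (J : ℕ) (M N : ℤ) (s : Bool), PSp (J, M, N, s) →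
          Cb (eSp J M N s) = Dl (b (eSp J M N s)) - b (Dl (eSp J M N s)))) := by
  have hKq0 := Kq_nonneg hq0 hq1
  have hKC0 := KC_nonneg hq0 hq1 c1u c2u c1d c2d
  -- the six pieces of a
  obtain ⟨A1, hA1, hA1z⟩ := opPlus_exists true true 1
    (fun J M N => ap11 q (jv J) (hv M) (hv N)) (Kq q) hKq0
    (fun J M N h => bd_ap11 hq0 hq1 J M N h)
  obtain ⟨A2, hA2, hA2z⟩ := opPlus_exists true false 1
    (fun J M N => ap21 q (jv J) (hv M) (hv N)) (Kq q) hKq0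
    (fun J M N h => cross_weak hq0 hq1 (bd_ap21 hq0 hq1 J M N h))
  obtain ⟨A3, hA3, hA3z⟩ := opPlus_exists false false 1
    (fun J M N => ap22 q (jv J) (hv M) (hv N)) (Kq q) hKq0
    (fun J M N h => bd_ap22 hq0 hq1 J M N h)
  obtain ⟨A4, hA4, hA4z⟩ := opMinus_exists true true 1
    (fun J M N => am11 q (jv J) (hv M) (hv N)) (Kq q) hKq0
    (fun J M N h => bd_am11 hq0 hq1 J M N h)
  obtain ⟨A5, hA5, hA5z⟩ := opMinus_exists false true 1
    (fun J M N => am12 q (jv J) (hv M) (hv N)) (Kq q) hKq0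
    (fun J M N h => cross_weak hq0 hq1 (bd_am12 hq0 hq1 J M N h))
  obtain ⟨A6, hA6, hA6z⟩ := opMinus_exists false false 1
    (fun J M N => am22 q (jv J) (hv M) (hv N)) (Kq q) hKq0
    (fun J M N h => bd_am22 hq0 hq1 J M N h)
  -- the six pieces of b
  obtain ⟨B1, hB1, hB1z⟩ := opPlus_exists true true (-1)
    (fun J M N => bp11 q (jv J) (hv M) (hv N)) (Kq q) hKq0
    (fun J M N h => bd_bp11 hq0 hq1 J M N h)
  obtain ⟨B2, hB2, hB2z⟩ := opPlus_exists true false (-1)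
    (fun J M N => bp21 q (jv J) (hv M) (hv N)) (Kq q) hKq0
    (fun J M N h => cross_weak hq0 hq1 (bd_bp21 hq0 hq1 J M N h))
  obtain ⟨B3, hB3, hB3z⟩ := opPlus_exists false false (-1)
    (fun J M N => bp22 q (jv J) (hv M) (hv N)) (Kq q) hKq0
    (fun J M N h => bd_bp22 hq0 hq1 J M N h)
  obtain ⟨B4, hB4, hB4z⟩ := opMinus_exists true true (-1)
    (fun J M N => bm11 q (jv J) (hv M) (hv N)) (Kq q) hKq0
    (fun J M N h => bd_bm11 hq0 hq1 J M N h)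
  obtain ⟨B5, hB5, hB5z⟩ := opMinus_exists false true (-1)
    (fun J M N => bm12 q (jv J) (hv M) (hv N)) (Kq q) hKq0
    (fun J M N h => cross_weak hq0 hq1 (bd_bm12 hq0 hq1 J M N h))
  obtain ⟨B6, hB6, hB6z⟩ := opMinus_exists false false (-1)
    (fun J M N => bm22 q (jv J) (hv M) (hv N)) (Kq q) hKq0
    (fun J M N h => bd_bm22 hq0 hq1 J M N h)
  refine ⟨A1 + A2 + A3 + A4 + A5 + A6, B1 + B2 + B3 + B4 + B5 + B6, ?_, ?_, ?_, ?_, ?_⟩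
  · intro J M N h
    have e1 := hA1 J M N h
    have e2 := hA2 J M N h
    have e3 := hA3z J M N true (by decide)
    have e4 := hA4 J M N h
    have e5 := hA5z J M N true (by decide)
    have e6 := hA6z J M N true (by decide)
    simp only [ContinuousLinearMap.add_apply, e1, e2, e3, e4, e5, e6, add_zero, zero_add]
    rw [show am21 q (jv J) (hv M) (hv N) = 0 from rfl]
    simp only [Complex.ofReal_zero, zero_smul, add_zero]
  · intro J M N h
    have e1 := hA1z J M N false (by decide)
    have e2 := hA2z J M N false (by decide)
    have e3 := hA3 J M N h
    have e4 := hA4z J M N false (by decide)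
    have e5 := hA5 J M N h
    have e6 := hA6 J M N h
    simp only [ContinuousLinearMap.add_apply, e1, e2, e3, e4, e5, e6, add_zero, zero_add]
    rw [show ap12 q (jv J) (hv M) (hv N) = 0 from rfl]
    simp only [Complex.ofReal_zero, zero_smul, zero_add]
  · intro J M N h
    have hNN : N + (-1 : ℤ) = N - 1 := by ring
    have e1 := hB1 J M N h
    have e2 := hB2 J M N h
    have e3 := hB3z J M N true (by decide)
    have e4 := hB4 J M N h
    have e5 := hB5z J M N true (by decide)
    have e6 := hB6z J M N true (by decide)
    rw [hNN] at e1 e2 e4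
    simp only [ContinuousLinearMap.add_apply, e1, e2, e3, e4, e5, e6, add_zero, zero_add]
    rw [show bm21 q (jv J) (hv M) (hv N) = 0 from rfl]
    simp only [Complex.ofReal_zero, zero_smul, add_zero]
  · intro J M N h
    have hNN : N + (-1 : ℤ) = N - 1 := by ring
    have e1 := hB1z J M N false (by decide)
    have e2 := hB2z J M N false (by decide)
    have e3 := hB3 J M N h
    have e4 := hB4z J M N false (by decide)
    have e5 := hB5 J M N h
    have e6 := hB6 J M N h
    rw [hNN] at e3 e5 e6
    simp only [ContinuousLinearMap.add_apply, e1, e2, e3, e4, e5, e6, add_zero, zero_add]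
    rw [show bp12 q (jv J) (hv M) (hv N) = 0 from rfl]
    simp only [Complex.ofReal_zero, zero_smul, zero_add]
  · intro Dl hDl
    have hDe : ∀ (J : ℕ) (M N : ℤ) (s : Bool),
        Dl (eSp J M N s) = ((dSp c1u c2u c1d c2d J s : ℝ) : ℂ) • eSp J M N s := by
      intro J M N s
      by_cases h : PSp (J, M, N, s)
      · exact hDl J M N s h
      · rw [eSp_neg h, map_zero, smul_zero]
    constructor
    · -- commutator with a
      obtain ⟨C1, hC1, hC1z⟩ := opPlus_exists true true 1
        (fun J M N => (dSp c1u c2u c1d c2d (J+1) true - dSp c1u c2u c1d c2d J true) *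
          ap11 q (jv J) (hv M) (hv N)) (KC q c1u c2u c1d c2d) hKC0
        (fun J M N h => comm_same hq0 hq1 c1u c2u c1d c2d _ _
          (abs_dd_same c1u c2u c1d c2d J (J+1) true (by omega) (by omega))
          (bd_ap11 hq0 hq1 J M N h))
      obtain ⟨C2, hC2, hC2z⟩ := opPlus_exists true false 1
        (fun J M N => (dSp c1u c2u c1d c2d (J+1) false - dSp c1u c2u c1d c2d J true) *
          ap21 q (jv J) (hv M) (hv N)) (KC q c1u c2u c1d c2d) hKC0
        (fun J M N h => comm_cross hq0 hq1 c1u c2u c1d c2d J _ _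
          (abs_dd_cross c1u c2u c1d c2d J (J+1) true false (by decide) (by omega))
          (bd_ap21 hq0 hq1 J M N h))
      obtain ⟨C3, hC3, hC3z⟩ := opPlus_exists false false 1
        (fun J M N => (dSp c1u c2u c1d c2d (J+1) false - dSp c1u c2u c1d c2d J false) *
          ap22 q (jv J) (hv M) (hv N)) (KC q c1u c2u c1d c2d) hKC0
        (fun J M N h => comm_same hq0 hq1 c1u c2u c1d c2d _ _
          (abs_dd_same c1u c2u c1d c2d J (J+1) false (by omega) (by omega))
          (bd_ap22 hq0 hq1 J M N h))
      obtain ⟨C4, hC4, hC4z⟩ := opMinus_exists true true 1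
        (fun J M N => (dSp c1u c2u c1d c2d (J-1) true - dSp c1u c2u c1d c2d J true) *
          am11 q (jv J) (hv M) (hv N)) (KC q c1u c2u c1d c2d) hKC0
        (fun J M N h => comm_same hq0 hq1 c1u c2u c1d c2d _ _
          (abs_dd_same c1u c2u c1d c2d J (J-1) true (by omega) (by omega))
          (bd_am11 hq0 hq1 J M N h))
      obtain ⟨C5, hC5, hC5z⟩ := opMinus_exists false true 1
        (fun J M N => (dSp c1u c2u c1d c2d (J-1) true - dSp c1u c2u c1d c2d J false) *
          am12 q (jv J) (hv M) (hv N)) (KC q c1u c2u c1d c2d) hKC0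
        (fun J M N h => comm_cross hq0 hq1 c1u c2u c1d c2d J _ _
          (abs_dd_cross c1u c2u c1d c2d J (J-1) false true (by decide) (by omega))
          (bd_am12 hq0 hq1 J M N h))
      obtain ⟨C6, hC6, hC6z⟩ := opMinus_exists false false 1
        (fun J M N => (dSp c1u c2u c1d c2d (J-1) false - dSp c1u c2u c1d c2d J false) *
          am22 q (jv J) (hv M) (hv N)) (KC q c1u c2u c1d c2d) hKC0
        (fun J M N h => comm_same hq0 hq1 c1u c2u c1d c2d _ _
          (abs_dd_same c1u c2u c1d c2d J (J-1) false (by omega) (by omega))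
          (bd_am22 hq0 hq1 J M N h))
      refine ⟨C1 + C2 + C3 + C4 + C5 + C6, ?_⟩
      intro J M N s h
      cases s
      · have e1 := hA1z J M N false (by decide)
        have e2 := hA2z J M N false (by decide)
        have e3 := hA3 J M N h
        have e4 := hA4z J M N false (by decide)
        have e5 := hA5 J M N h
        have e6 := hA6 J M N h
        have f1 := hC1z J M N false (by decide)
        have f2 := hC2z J M N false (by decide)
        have f3 := hC3 J M N h
        have f4 := hC4z J M N false (by decide)
        have f5 := hC5 J M N h
        have f6 := hC6 J M N h
        simp only [ContinuousLinearMap.add_apply, e1, e2, e3, e4, e5, e6,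
          f1, f2, f3, f4, f5, f6, hDe, map_add, map_smul, add_zero, zero_add, smul_smul,
          Complex.ofReal_mul, Complex.ofReal_sub]
        module
      · have e1 := hA1 J M N h
        have e2 := hA2 J M N h
        have e3 := hA3z J M N true (by decide)
        have e4 := hA4 J M N h
        have e5 := hA5z J M N true (by decide)
        have e6 := hA6z J M N true (by decide)
        have f1 := hC1 J M N h
        have f2 := hC2 J M N h
        have f3 := hC3z J M N true (by decide)
        have f4 := hC4 J M N h
        have f5 := hC5z J M N true (by decide)
        have f6 := hC6z J M N true (by decide)
        simp only [ContinuousLinearMap.add_apply, e1, e2, e3, e4, e5, e6,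
          f1, f2, f3, f4, f5, f6, hDe, map_add, map_smul, add_zero, zero_add, smul_smul,
          Complex.ofReal_mul, Complex.ofReal_sub]
        module
    · -- commutator with b
      obtain ⟨D1, hD1, hD1z⟩ := opPlus_exists true true (-1)
        (fun J M N => (dSp c1u c2u c1d c2d (J+1) true - dSp c1u c2u c1d c2d J true) *
          bp11 q (jv J) (hv M) (hv N)) (KC q c1u c2u c1d c2d) hKC0
        (fun J M N h => comm_same hq0 hq1 c1u c2u c1d c2d _ _
          (abs_dd_same c1u c2u c1d c2d J (J+1) true (by omega) (by omega))
          (bd_bp11 hq0 hq1 J M N h))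
      obtain ⟨D2, hD2, hD2z⟩ := opPlus_exists true false (-1)
        (fun J M N => (dSp c1u c2u c1d c2d (J+1) false - dSp c1u c2u c1d c2d J true) *
          bp21 q (jv J) (hv M) (hv N)) (KC q c1u c2u c1d c2d) hKC0
        (fun J M N h => comm_cross hq0 hq1 c1u c2u c1d c2d J _ _
          (abs_dd_cross c1u c2u c1d c2d J (J+1) true false (by decide) (by omega))
          (bd_bp21 hq0 hq1 J M N h))
      obtain ⟨D3, hD3, hD3z⟩ := opPlus_exists false false (-1)
        (fun J M N => (dSp c1u c2u c1d c2d (J+1) false - dSp c1u c2u c1d c2d J false) *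
          bp22 q (jv J) (hv M) (hv N)) (KC q c1u c2u c1d c2d) hKC0
        (fun J M N h => comm_same hq0 hq1 c1u c2u c1d c2d _ _
          (abs_dd_same c1u c2u c1d c2d J (J+1) false (by omega) (by omega))
          (bd_bp22 hq0 hq1 J M N h))
      obtain ⟨D4, hD4, hD4z⟩ := opMinus_exists true true (-1)
        (fun J M N => (dSp c1u c2u c1d c2d (J-1) true - dSp c1u c2u c1d c2d J true) *
          bm11 q (jv J) (hv M) (hv N)) (KC q c1u c2u c1d c2d) hKC0
        (fun J M N h => comm_same hq0 hq1 c1u c2u c1d c2d _ _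
          (abs_dd_same c1u c2u c1d c2d J (J-1) true (by omega) (by omega))
          (bd_bm11 hq0 hq1 J M N h))
      obtain ⟨D5, hD5, hD5z⟩ := opMinus_exists false true (-1)
        (fun J M N => (dSp c1u c2u c1d c2d (J-1) true - dSp c1u c2u c1d c2d J false) *
          bm12 q (jv J) (hv M) (hv N)) (KC q c1u c2u c1d c2d) hKC0
        (fun J M N h => comm_cross hq0 hq1 c1u c2u c1d c2d J _ _
          (abs_dd_cross c1u c2u c1d c2d J (J-1) false true (by decide) (by omega))
          (bd_bm12 hq0 hq1 J M N h))
      obtain ⟨D6, hD6, hD6z⟩ := opMinus_exists false false (-1)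
        (fun J M N => (dSp c1u c2u c1d c2d (J-1) false - dSp c1u c2u c1d c2d J false) *
          bm22 q (jv J) (hv M) (hv N)) (KC q c1u c2u c1d c2d) hKC0
        (fun J M N h => comm_same hq0 hq1 c1u c2u c1d c2d _ _
          (abs_dd_same c1u c2u c1d c2d J (J-1) false (by omega) (by omega))
          (bd_bm22 hq0 hq1 J M N h))
      refine ⟨D1 + D2 + D3 + D4 + D5 + D6, ?_⟩
      intro J M N s h
      cases s
      · have e1 := hB1z J M N false (by decide)
        have e2 := hB2z J M N false (by decide)
        have e3 := hB3 J M N h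
        have e4 := hB4z J M N false (by decide)
        have e5 := hB5 J M N h
        have e6 := hB6 J M N h
        have f1 := hD1z J M N false (by decide)
        have f2 := hD2z J M N false (by decide)
        have f3 := hD3 J M N h
        have f4 := hD4z J M N false (by decide)
        have f5 := hD5 J M N h
        have f6 := hD6 J M N h
        simp only [ContinuousLinearMap.add_apply, e1, e2, e3, e4, e5, e6,
          f1, f2, f3, f4, f5, f6, hDe, map_add, map_smul, add_zero, zero_add, smul_smul,
          Complex.ofReal_mul, Complex.ofReal_sub]
        module
      · have e1 := hB1 J M N h
        have e2 := hB2 J M N h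
        have e3 := hB3z J M N true (by decide)
        have e4 := hB4 J M N h
        have e5 := hB5z J M N true (by decide)
        have e6 := hB6z J M N true (by decide)
        have f1 := hD1 J M N h
        have f2 := hD2 J M N h
        have f3 := hD3z J M N true (by decide)
        have f4 := hD4 J M N h
        have f5 := hD5z J M N true (by decide)
        have f6 := hD6z J M N true (by decide)
        simp only [ContinuousLinearMap.add_apply, e1, e2, e3, e4, e5, e6,
          f1, f2, f3, f4, f5, f6, hDe, map_add, map_smul, add_zero, zero_add, smul_smul,
          Complex.ofReal_mul, Complex.ofReal_sub]
        module

end
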